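/- Let f : ℝ^n → ℝ be differentiable and let i ∈ {1,…,n}. Suppose there is a constant L_i > 0 such that |∂_i f(x + t e_i) − ∂_i f(x)| ≤ L_i |t| for all x ∈ ℝ^n and t ∈ ℝ. Let Q_i ⊆ ℝ be a closed convex set, let x ∈ ℝ^n with x_i ∈ Q_i, and let u ∈ Q_i be a minimizer over Q_i of the function t ↦ ∂_i f(x)·(t − x_i) + (L_i/2)(t − x_i)². Then the constrained coordinate update V_i(x) = x + (u − x_i) e_i satisfies f(x) − f(V_i(x)) ≥ (L_i/2)(u − x_i)². -/

import Mathlib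

/-- Per-step decrease of the uniform coordinate descent method. If `f` is
differentiable with `i`-th partial derivative Lipschitz along coordinate `i` with
constant `Lᵢ > 0`, `Qᵢ ⊆ ℝ` is closed and convex, `xᵢ ∈ Qᵢ`, and `u ∈ Qᵢ` minimizes the
surrogate `t ↦ ∂ᵢf(x)(t - xᵢ) + (Lᵢ/2)(t - xᵢ)²` over `Qᵢ`, then the constrained
coordinate update `Vᵢ(x) = x + (u - xᵢ) eᵢ` satisfies
`f(x) - f(Vᵢ(x)) ≥ (Lᵢ/2)(u - xᵢ)²`. -/
theorem ucdm_step_decrease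
    (n : ℕ) (f : (Fin n → ℝ) → ℝ) (hf : Differentiable ℝ f) (i : Fin n)
    (L : ℝ) (hL : 0 < L)
    (hlip : ∀ (x : Fin n → ℝ) (t : ℝ),
      |fderiv ℝ f (x + t • (Pi.single i 1 : Fin n → ℝ)) (Pi.single i 1 : Fin n → ℝ) -
        fderiv ℝ f x (Pi.single i 1 : Fin n → ℝ)| ≤ L * |t|)
    (Q : Set ℝ) (hQclosed : IsClosed Q) (hQconvex : Convex ℝ Q)
    (x : Fin n → ℝ) (hxQ : x i ∈ Q) (u : ℝ) (huQ : u ∈ Q)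
    (hmin : ∀ t ∈ Q,
      fderiv ℝ f x (Pi.single i 1 : Fin n → ℝ) * (u - x i) + L / 2 * (u - x i) ^ 2 ≤
      fderiv ℝ f x (Pi.single i 1 : Fin n → ℝ) * (t - x i) + L / 2 * (t - x i) ^ 2) :
    f x - f (x + (u - x i) • (Pi.single i 1 : Fin n → ℝ)) ≥ L / 2 * (u - x i) ^ 2 := by
  set e : Fin n → ℝ := (Pi.single i 1 : Fin n → ℝ) with he
  set h : ℝ := u - x i with hh
  set g' : ℝ → ℝ := fun s => fderiv ℝ f (x + s • e) e with hg'
  have hD0 : g' 0 = fderiv ℝ f x e := by simp [hg']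
  -- Lipschitz property of g'
  have hlipG : ∀ a b : ℝ, |g' a - g' b| ≤ L * |a - b| := by
    intro a b
    have key := hlip (x + b • e) (a - b)
    have hab : b + (a - b) = a := by ring
    have hrw : x + b • e + (a - b) • e = x + a • e := by
      rw [add_assoc, ← add_smul, hab]
    rwa [hrw] at key
  have hcont : Continuous g' := by
    apply (LipschitzWith.of_dist_le_mul (K := ⟨L, hL.le⟩) ?_).continuous
    intro a b
    rw [Real.dist_eq, Real.dist_eq]; exact hlipG a b
  -- derivative of s ↦ f (x + s • e)
  have hder : ∀ s : ℝ, HasDerivAt (fun s : ℝ => f (x + s • e)) (g' s) s := by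
    intro s
    have h1 : HasDerivAt (fun s : ℝ => x + s • e) e s := by
      simpa using ((hasDerivAt_id s).smul_const e).const_add x
    have h2 := (hf (x + s • e)).hasFDerivAt
    exact h2.comp_hasDerivAt s h1
  -- FTC
  have hInt : ∀ a b : ℝ, IntervalIntegrable g' MeasureTheory.volume a b :=
    fun a b => hcont.intervalIntegrable a b
  have hIntLin : ∀ a b : ℝ,
      IntervalIntegrable (fun s : ℝ => g' 0 + L * s) MeasureTheory.volume a b := by
    intro a b
    exact (Continuous.intervalIntegrable (by fun_prop) a b)
  have hftc : f (x + h • e) - f x = ∫ s in (0:ℝ)..h, g' s := by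
    have := intervalIntegral.integral_eq_sub_of_hasDerivAt
      (f := fun s : ℝ => f (x + s • e)) (f' := g') (a := 0) (b := h)
      (fun t _ => hder t) (hInt 0 h)
    simp at this
    rw [this]
  -- explicit value of the linear comparison integral
  have hlin : ∀ a b : ℝ, (∫ s in a..b, (g' 0 + L * s)) =
      g' 0 * (b - a) + L * ((b ^ 2 - a ^ 2) / 2) := by
    intro a b
    have h1 : (∫ s in a..b, (g' 0 + L * s)) =
        (∫ _ in a..b, g' 0) + ∫ s in a..b, L * s :=
      intervalIntegral.integral_add (intervalIntegrable_const)
        (Continuous.intervalIntegrable (by fun_prop) a b)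
    rw [h1, intervalIntegral.integral_const, intervalIntegral.integral_const_mul,
      integral_id, smul_eq_mul]
    ring
  -- descent lemma: ∫ g' ≤ g'(0)*h + L/2 h²
  have hdesc : (∫ s in (0:ℝ)..h, g' s) ≤ g' 0 * h + L / 2 * h ^ 2 := by
    rcases le_or_gt 0 h with hsign | hsign
    · have hmono : (∫ s in (0:ℝ)..h, g' s) ≤ ∫ s in (0:ℝ)..h, (g' 0 + L * s) := by
        apply intervalIntegral.integral_mono_on hsign (hInt 0 h) (hIntLin 0 h)
        intro s hs
        have hub := (abs_le.mp (hlipG s 0)).2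
        have hsabs : |s - 0| = s := by
          rw [sub_zero, abs_of_nonneg hs.1]
        rw [hsabs] at hub
        linarith
      rw [hlin 0 h] at hmono
      nlinarith [hmono]
    · have hmono : (∫ s in h..(0:ℝ), (g' 0 + L * s)) ≤ ∫ s in h..(0:ℝ), g' s := by
        apply intervalIntegral.integral_mono_on hsign.le (hIntLin h 0) (hInt h 0)
        intro s hs
        have hlb := (abs_le.mp (hlipG s 0)).1
        have hsabs : |s - 0| = -s := by
          rw [sub_zero, abs_of_nonpos hs.2]
        rw [hsabs] at hlb
        linarith
      rw [hlin h 0] at hmono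
      rw [intervalIntegral.integral_symm h 0]
      nlinarith [hmono]
  -- first-order optimality: g'(0)*h + L*h² ≤ 0
  have key : ∀ s : ℝ, 0 < s → s ≤ 1 → g' 0 * h + L * h ^ 2 ≤ L / 2 * h ^ 2 * s := by
    intro s hs0 hs1
    have ht : (1 - s) * u + s * (x i) ∈ Q := by
      have := hQconvex huQ hxQ (by linarith : (0:ℝ) ≤ 1 - s) hs0.le (by ring)
      simpa [smul_eq_mul] using this
    have hm := hmin _ ht
    have ht2 : (1 - s) * u + s * (x i) - x i = (1 - s) * h := by
      rw [hh]; ring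
    rw [ht2] at hm
    rw [hD0]
    have hmul : s * (fderiv ℝ f x e * h + L * h ^ 2)
        ≤ s * (L / 2 * h ^ 2 * s) := by nlinarith [hm]
    exact le_of_mul_le_mul_left hmul hs0
  have hfoc : g' 0 * h + L * h ^ 2 ≤ 0 := by
    by_contra hcon
    push_neg at hcon
    set a : ℝ := g' 0 * h + L * h ^ 2 with ha
    have hc : (0:ℝ) < L / 2 * h ^ 2 + 1 := by positivity
    have hs0 : 0 < min 1 (a / (2 * (L / 2 * h ^ 2 + 1))) := by
      apply lt_min one_pos
      positivity
    have hk := key _ hs0 (min_le_left _ _)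
    have h3 : min 1 (a / (2 * (L / 2 * h ^ 2 + 1))) ≤ a / (2 * (L / 2 * h ^ 2 + 1)) :=
      min_le_right _ _
    have h4 : L / 2 * h ^ 2 * min 1 (a / (2 * (L / 2 * h ^ 2 + 1))) ≤ a / 2 := by
      have h5 : L / 2 * h ^ 2 * min 1 (a / (2 * (L / 2 * h ^ 2 + 1)))
          ≤ (L / 2 * h ^ 2 + 1) * (a / (2 * (L / 2 * h ^ 2 + 1))) := by
        apply mul_le_mul (by linarith) h3 (le_of_lt hs0) hc.le
      have h6 : (L / 2 * h ^ 2 + 1) * (a / (2 * (L / 2 * h ^ 2 + 1))) = a / 2 := by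
        field_simp
      linarith
    linarith
  -- conclude
  have hfin : f (x + h • e) - f x ≤ g' 0 * h + L / 2 * h ^ 2 := by
    rw [hftc]; exact hdesc
  clear_value e h g'
  nlinarith [hfin, hfoc]
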